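/- The formal power series η/(1 - e^{-η}) in Q[[η]] has constant term 1 and is invertible; its (N+1)-st power times e^{aη} (a an integer) has η^N-coefficient equal to C(a+N, N) when a ≥ 0. -/

import Mathlib

open PowerSeries

lemma todd_aux_dE : d⁄dX ℚ (rescale (-1 : ℚ) (exp ℚ)) = -(rescale (-1 : ℚ) (exp ℚ)) := by
  ext n
  rw [coeff_derivative, map_neg, coeff_rescale, coeff_rescale, coeff_exp, coeff_exp]
  simp only [eq_ratCast, Rat.cast_div, Rat.cast_one, Rat.cast_natCast]
  rw [pow_succ, Nat.factorial_succ]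
  have h1 : ((n+1 : ℕ) : ℚ) ≠ 0 := by positivity
  have h2 : ((n.factorial : ℕ) : ℚ) ≠ 0 := by positivity
  push_cast
  field_simp

lemma todd_aux_c0 (T : PowerSeries ℚ)
    (hT : T * (1 - rescale (-1 : ℚ) (exp ℚ)) = X) :
    constantCoeff T = 1 := by
  have h1 := congrArg (coeff 1) hT
  rw [coeff_one_X, coeff_mul, Finset.Nat.sum_antidiagonal_eq_sum_range_succ_mk] at h1
  simp only [Finset.sum_range_succ, Finset.sum_range_zero, zero_add] at h1
  simp only [map_sub, coeff_one, coeff_rescale, coeff_exp, coeff_zero_eq_constantCoeff,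
    map_one, constantCoeff_exp, Nat.factorial_one, Nat.factorial_zero] at h1
  norm_num at h1
  simpa using h1

lemma todd_aux_key (T : PowerSeries ℚ)
    (hT : T * (1 - rescale (-1 : ℚ) (exp ℚ)) = X) (m : ℕ) :
    coeff (m + 1) (rescale (-1 : ℚ) (exp ℚ) * T ^ (m + 2)) = 0 := by
  set E := rescale (-1 : ℚ) (exp ℚ) with hE
  -- differentiate hT
  have hdiff := congrArg (d⁄dX ℚ) hT
  rw [Derivation.leibniz, derivative_X, map_sub, Derivation.map_one_eq_zero, todd_aux_dE,
    ← hE] at hdiff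
  simp only [smul_eq_mul, zero_sub, neg_neg, mul_neg, sub_neg_eq_add] at hdiff
  -- hdiff : T * E + (1 - E) * d⁄dX ℚ T = 1
  have hTE : T * E = 1 - d⁄dX ℚ T * (1 - E) := by linear_combination hdiff
  have hmain : E * T ^ (m + 2) = T ^ (m + 1) - d⁄dX ℚ T * (X * T ^ m) := by
    calc E * T ^ (m + 2) = (T * E) * T ^ (m + 1) := by ring
    _ = (1 - d⁄dX ℚ T * (1 - E)) * T ^ (m + 1) := by rw [hTE]
    _ = T ^ (m + 1) - d⁄dX ℚ T * ((T * (1 - E)) * T ^ m) := by ring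
    _ = T ^ (m + 1) - d⁄dX ℚ T * (X * T ^ m) := by rw [hT]
  rw [hmain, map_sub]
  have hA : coeff m (d⁄dX ℚ (T ^ (m + 1))) = coeff (m + 1) (T ^ (m + 1)) * (m + 1) :=
    coeff_derivative _ _
  have hB : coeff m (d⁄dX ℚ (T ^ (m + 1))) =
      (m + 1 : ℚ) * coeff m (d⁄dX ℚ T * (T ^ m)) := by
    rw [Derivation.leibniz_pow, map_nsmul, nsmul_eq_mul, Nat.add_sub_cancel, smul_eq_mul,
      mul_comm (T ^ m)]
    push_cast
    ring
  have hm1 : ((m : ℚ) + 1) ≠ 0 := by positivity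
  have h3 : coeff m (d⁄dX ℚ T * T ^ m) = coeff (m + 1) (T ^ (m + 1)) := by
    apply mul_left_cancel₀ hm1
    rw [← hB, hA]
    ring
  have h2 : coeff (m + 1) (d⁄dX ℚ T * (X * T ^ m)) = coeff m (d⁄dX ℚ T * T ^ m) := by
    have hx : d⁄dX ℚ T * (X * T ^ m) = X * (d⁄dX ℚ T * T ^ m) := by ring
    rw [hx, coeff_succ_X_mul]
  rw [h2, h3]
  ring

lemma todd_aux_diag (T : PowerSeries ℚ)
    (hT : T * (1 - rescale (-1 : ℚ) (exp ℚ)) = X) (N : ℕ) :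
    coeff N (T ^ (N + 1)) = 1 := by
  induction N with
  | zero => simpa [coeff_zero_eq_constantCoeff] using todd_aux_c0 T hT
  | succ n ih =>
    have hsplit : T ^ (n + 2) =
        rescale (-1 : ℚ) (exp ℚ) * T ^ (n + 2) + X * T ^ (n + 1) := by
      linear_combination T ^ (n + 1) * hT
    rw [hsplit, map_add, todd_aux_key T hT n, coeff_succ_X_mul, ih]
    ring

/-- The formal power series `T = η/(1 - e^{-η})` in `ℚ⟦η⟧` (characterized by
`T * (1 - e^{-η}) = η`) has constant term `1` and is invertible; and for every
nonnegative integer `a`, the coefficient of `η^N` in `e^{aη} · T^{N+1}` equals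
`C(a+N, N)`. -/
theorem todd_series_unit_and_coeff (N : ℕ) (T : PowerSeries ℚ)
    (hT : T * (1 - rescale (-1 : ℚ) (exp ℚ)) = X) :
    constantCoeff T = 1 ∧ IsUnit T ∧
      ∀ a : ℕ, coeff N (rescale (a : ℚ) (exp ℚ) * T ^ (N + 1)) = (a + N).choose N := by
  have hc0 := todd_aux_c0 T hT
  refine ⟨hc0, ?_, ?_⟩
  · rw [isUnit_iff_constantCoeff, hc0]; exact isUnit_one
  · -- main coefficient claim, by induction on N then a
    induction N with
    | zero =>
      intro a
      rw [coeff_zero_eq_constantCoeff, map_mul, zero_add, pow_one, hc0, mul_one,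
        ← coeff_zero_eq_constantCoeff_apply, coeff_rescale]
      simp [coeff_zero_eq_constantCoeff, constantCoeff_exp]
    | succ n ih =>
      intro a
      induction a with
      | zero =>
        simp only [Nat.cast_zero, rescale_zero, RingHom.comp_apply, constantCoeff_exp, map_one,
          one_mul]
        rw [todd_aux_diag T hT (n + 1)]
        simp [Nat.choose_self]
      | succ b ihb =>
        -- relate g(n+1, b) and g(n+1, b+1)
        have hrel : rescale (b : ℚ) (exp ℚ) =
            rescale ((b : ℚ) + 1) (exp ℚ) * rescale (-1 : ℚ) (exp ℚ) := by
          rw [exp_mul_exp_eq_exp_add]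
          norm_num
        have hsplit : rescale (b : ℚ) (exp ℚ) * T ^ (n + 2) =
            rescale ((b : ℚ) + 1) (exp ℚ) * T ^ (n + 2)
              - rescale ((b : ℚ) + 1) (exp ℚ) * (X * T ^ (n + 1)) := by
          linear_combination T ^ (n + 2) * hrel
            - rescale ((b : ℚ) + 1) (exp ℚ) * T ^ (n + 1) * hT
        have hb' : coeff (n + 1) (rescale ((b : ℚ) + 1) (exp ℚ) * T ^ (n + 2)) =
            coeff (n + 1) (rescale ((b : ℚ)) (exp ℚ) * T ^ (n + 2))
              + coeff n (rescale ((b : ℚ) + 1) (exp ℚ) * T ^ (n + 1)) := by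
          have := congrArg (coeff (n + 1)) hsplit
          rw [map_sub] at this
          have hx : rescale ((b : ℚ) + 1) (exp ℚ) * (X * T ^ (n + 1))
              = X * (rescale ((b : ℚ) + 1) (exp ℚ) * T ^ (n + 1)) := by ring
          rw [hx, coeff_succ_X_mul] at this
          linarith [this]
        have hcast : ((b : ℚ) + 1) = ((b + 1 : ℕ) : ℚ) := by push_cast; ring
        rw [hcast] at hb'
        rw [hb', ihb, ← hcast]
        have hn : coeff n (rescale ((b + 1 : ℕ) : ℚ) (exp ℚ) * T ^ (n + 1)) =
            ((b + 1 + n).choose n : ℚ) := ih (b + 1)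
        rw [hcast, hn]
        have hch : (b + 1 + (n + 1)).choose (n + 1)
            = (b + (n + 1)).choose (n + 1) + (b + 1 + n).choose n := by
          have h := Nat.choose_succ_succ' (b + n + 1) n
          have e1 : b + 1 + (n + 1) = (b + n + 1) + 1 := by omega
          have e2 : b + (n + 1) = b + n + 1 := by omega
          have e3 : b + 1 + n = b + n + 1 := by omega
          rw [e1, e2, e3, h]; omega
        rw [hch]
        push_cast
        ring
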